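/- arXiv:2405.17574 — 3 statements merged into one kernel-verified Lean document; each statement's English description precedes it below -/
import Mathlib

section
/- Let $X$ be an infinite compact metric space and $f: X \to X$ a homeomorphism satisfying the gluing-orbit property. Then $f$ is not positively countably expansive, i.e., for every $\varepsilon > 0$ there exists $x \in X$ such that $W^s_\varepsilon(x)$ is uncountable. -/
open Function Metric Filter

variable {X : Type*}

/-- `(c, t)` is `ε`-traced by `z`: an orbit sequence `c = (x_j, m_j)_{j ∈ ℕ}` with gap
`t = (t_j)_{j ∈ ℕ}` is `ε`-traced by `z` if `d(f^(s_j + l)(z), f^l(x_j)) ≤ ε` for all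
`0 ≤ l ≤ m_j`, where `s_j = ∑_{i<j} (m_i + t_i)`. -/
def TracedBy [MetricSpace X] (f : X → X) (c : ℕ → X × ℕ) (t : ℕ → ℕ) (ε : ℝ) (z : X) : Prop :=
  ∀ j l, l ≤ (c j).2 →
    dist (f^[(∑ i ∈ Finset.range j, ((c i).2 + t i)) + l] z) (f^[l] (c j).1) ≤ ε

/-- `f` has the gluing-orbit property: for each `ε > 0` there is `M ∈ ℕ` such that every
orbit sequence admits a gap with entries in `{1, …, M}` so that the pair is `ε`-traced by
some point. -/
def GluingOrbit [MetricSpace X] (f : X → X) : Prop :=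
  ∀ ε : ℝ, 0 < ε → ∃ M : ℕ, ∀ c : ℕ → X × ℕ, ∃ t : ℕ → ℕ,
    (∀ j, 1 ≤ t j ∧ t j ≤ M) ∧ ∃ z : X, TracedBy f c t ε z
/-- The `ε`-stable set of `x`. -/
def Ws [MetricSpace X] (f : X → X) (ε : ℝ) (x : X) : Set X :=
  {y | ∀ k : ℕ, dist (f^[k] y) (f^[k] x) ≤ ε}

/-!
Suppose every `W^s_ε(x)` is countable. If finitely many of them covered `X`, then `X` would be
countable. But the gluing-orbit property leaves no isolated points (an isolated point would be
periodic with a dense orbit, so `X` would be finite), hence the compact space `X` is perfect and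
uncountable.

Otherwise there are arbitrarily large `ε`-separated finite sets, and a finite time `n` separating
all points of such a set. Gluing each point `v` of the set, for time `n`, in front of the whole
forward orbit of `u` yields points of `W^s_δ(u)`; as the gaps take at most `M` values, two of
`M + 1` such points share their gap and are then distinct. So every `W^s_δ(u)` has at least two
points, which makes `⋃_{ρ < ε} W^s_ρ(x)` preperfect, and its closure is a nonempty perfect subset
of `W^s_ε(x)`.
-/

open Set

section StableSets

variable [MetricSpace X] {f : X → X} {x y z u : X} {ε δ ρ : ℝ}

theorem Perfect.not_countable [CompleteSpace X] {C : Set X} (hC : Perfect C)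
    (hne : C.Nonempty) : ¬ C.Countable := by
  obtain ⟨g, hgC, -, hg⟩ := hC.exists_nat_bool_injection hne
  intro hCc
  have := (hCc.mono hgC).to_subtype
  have hcount : Countable (ℕ → Bool) :=
    ((injective_codRestrict fun a => mem_range_self a).2 hg).countable
  rw [← Cardinal.mk_le_aleph0_iff] at hcount
  exact (Cardinal.aleph0_lt_continuum.trans_le (by simpa using hcount)).false

def closedBowenBall (f : X → X) (x : X) (n : ℕ) (ε : ℝ) : Set X :=
  {y | ∀ k ≤ n, dist (f^[k] y) (f^[k] x) ≤ ε}

theorem mem_Ws_comm : y ∈ Ws f ε x ↔ x ∈ Ws f ε y := by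
  simp only [Ws, mem_ofPred_eq, dist_comm]

theorem mem_Ws_self (hε : 0 ≤ ε) : x ∈ Ws f ε x := fun k => by simpa using hε

theorem dist_le_of_mem_Ws (h : y ∈ Ws f ε x) : dist y x ≤ ε := h 0

theorem Ws_mono (h : ε ≤ δ) : Ws f ε x ⊆ Ws f δ x := fun _ hy k => (hy k).trans h

theorem mem_Ws_trans (hz : z ∈ Ws f δ y) (hy : y ∈ Ws f ρ x) : z ∈ Ws f (δ + ρ) x :=
  fun k => (dist_triangle _ _ _).trans (add_le_add (hz k) (hy k))

theorem Ws_eq_iInter_closedBowenBall : Ws f ε x = ⋂ n, closedBowenBall f x n ε := by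
  ext y
  simp only [Ws, closedBowenBall, mem_ofPred_eq, mem_iInter]
  exact ⟨fun h _ k _ => h k, fun h k => h k k le_rfl⟩

theorem closedBowenBall_anti {m n : ℕ} (hmn : m ≤ n) :
    closedBowenBall f x n ε ⊆ closedBowenBall f x m ε :=
  fun _ hy k hk => hy k (hk.trans hmn)

theorem isClosed_closedBowenBall (hf : Continuous f) (n : ℕ) :
    IsClosed (closedBowenBall f x n ε) := by
  simp only [closedBowenBall, ofPred_forall]
  exact isClosed_iInter fun k => isClosed_iInter fun _ =>
    isClosed_le ((hf.iterate k).dist continuous_const) continuous_const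

theorem isClosed_Ws (hf : Continuous f) : IsClosed (Ws f ε x) := by
  rw [Ws_eq_iInter_closedBowenBall]
  exact isClosed_iInter (isClosed_closedBowenBall hf)

theorem IsClosed.inter_Ws_nonempty [CompactSpace X] {K : Set X} (hK : IsClosed K)
    (hf : Continuous f) (h : ∀ n, (K ∩ closedBowenBall f x n ε).Nonempty) :
    (K ∩ Ws f ε x).Nonempty := by
  have hclosed n : IsClosed (K ∩ closedBowenBall f x n ε) :=
    hK.inter (isClosed_closedBowenBall hf n)
  rw [Ws_eq_iInter_closedBowenBall, inter_iInter]
  exact IsCompact.nonempty_iInter_of_sequence_nonempty_isCompact_isClosed _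
    (fun n => inter_subset_inter_right _ (closedBowenBall_anti n.le_succ)) h
    (hclosed 0).isCompact hclosed

theorem eventually_notMem_closedBowenBall (h : y ∉ Ws f ε x) :
    ∀ᶠ n in atTop, y ∉ closedBowenBall f x n ε := by
  simp only [Ws_eq_iInter_closedBowenBall, mem_iInter, not_forall] at h
  obtain ⟨m, hm⟩ := h
  exact eventually_atTop.2 ⟨m, fun n hn hy => hm (closedBowenBall_anti hn hy)⟩

theorem exists_pairwise_notMem_closedBowenBall {s : Finset X}
    (hs : (s : Set X).Pairwise fun v w => v ∉ Ws f ε w) :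
    ∃ n, (s : Set X).Pairwise fun v w => v ∉ closedBowenBall f w n ε := by
  have : ∀ᶠ n in atTop, ∀ v ∈ s, ∀ w ∈ s, v ≠ w → v ∉ closedBowenBall f w n ε :=
    (eventually_all_finset s).2 fun v hv => (eventually_all_finset s).2 fun w hw =>
      eventually_imp_distrib_left.2 fun hvw => eventually_notMem_closedBowenBall (hs hv hw hvw)
  obtain ⟨n, hn⟩ := this.exists
  exact ⟨n, fun v hv w hw hvw => hn v hv w hw hvw⟩

theorem exists_card_eq_pairwise_notMem_Ws (hε : 0 ≤ ε)
    (h : ∀ s : Finset X, ∃ x, ∀ w ∈ s, x ∉ Ws f ε w) (N : ℕ) :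
    ∃ s : Finset X, s.card = N ∧ (s : Set X).Pairwise fun v w => v ∉ Ws f ε w := by
  classical
  induction N with
  | zero => exact ⟨∅, rfl, by simp⟩
  | succ N ih =>
    obtain ⟨s, hcard, hs⟩ := ih
    obtain ⟨x, hx⟩ := h s
    have hxs : x ∉ s := fun hxs => hx x hxs (mem_Ws_self hε)
    refine ⟨insert x s, by rw [Finset.card_insert_of_notMem hxs, hcard], ?_⟩
    rw [Finset.coe_insert, Set.pairwise_insert]
    exact ⟨hs, fun w hw _ => ⟨hx w hw, fun hwx => hx w hw (mem_Ws_comm.1 hwx)⟩⟩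

theorem not_countable_Ws_of_forall_nontrivial [CompleteSpace X] (hf : Continuous f)
    (h : ∀ u δ, 0 < δ → (Ws f δ u).Nontrivial) (hε : 0 < ε) (x : X) :
    ¬ (Ws f ε x).Countable := by
  set S := ⋃ ρ ∈ Iio ε, Ws f ρ x
  have hS : Preperfect S := by
    refine preperfect_iff_nhds.2 fun y hy U hU => ?_
    obtain ⟨ρ, hρ, hyx⟩ := mem_iUnion₂.1 hy
    obtain ⟨r, hr, hrU⟩ := Metric.mem_nhds_iff.1 hU
    have hδ : 0 < min (r / 2) ((ε - ρ) / 2) := lt_min (by linarith) (by linarith [mem_Iio.1 hρ])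
    obtain ⟨z, hz, hzy⟩ := (h y _ hδ).exists_ne y
    refine ⟨z, ⟨hrU (mem_ball.2 ?_), mem_iUnion₂.2 ⟨_, ?_, mem_Ws_trans hz hyx⟩⟩, hzy⟩
    · linarith [dist_le_of_mem_Ws hz, min_le_left (r / 2) ((ε - ρ) / 2)]
    · exact mem_Iio.2 (by linarith [mem_Iio.1 hρ, min_le_right (r / 2) ((ε - ρ) / 2)])
  have hSε : closure S ⊆ Ws f ε x :=
    closure_minimal (iUnion₂_subset fun _ hρ => Ws_mono (le_of_lt hρ)) (isClosed_Ws hf)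
  have hxS : x ∈ closure S := subset_closure (mem_iUnion₂.2 ⟨0, hε, mem_Ws_self le_rfl⟩)
  exact fun hc => hS.perfect_closure.not_countable ⟨x, hxS⟩ (hc.mono hSε)

end StableSets

namespace GluingOrbit

variable [MetricSpace X] {f : X → X}

theorem exists_iterate_dist_le_of_isolated (hf : GluingOrbit f) {x : X} {r : ℝ} (hr : 0 < r)
    (hx : ∀ z, dist z x < r → z = x) (y : X) {η : ℝ} (hη : 0 < η) :
    ∃ t, 0 < t ∧ dist (f^[t] x) y ≤ η := by
  obtain ⟨M, hM⟩ := hf (min η (r / 2)) (lt_min hη (by linarith))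
  obtain ⟨t, ht, z, hz⟩ := hM fun j => if j = 0 then (x, 0) else (y, 0)
  have hzx : z = x := hx z (by
    have := hz 0 0 le_rfl
    simp only [Finset.range_zero, Finset.sum_empty, add_zero, iterate_zero_apply, if_pos] at this
    linarith [min_le_right η (r / 2)])
  refine ⟨t 0, (ht 0).1, ?_⟩
  have := hz 1 0 le_rfl
  simp only [Finset.sum_range_one, if_pos, one_ne_zero, if_false, hzx] at this
  simpa using this.trans (min_le_left η (r / 2))

theorem perfectSpace [Infinite X] (hf : GluingOrbit f) : PerfectSpace X := by
  refine perfectSpace_iff_forall_not_isolated.2 fun x => neBot_iff.2 fun hbot => ?_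
  obtain ⟨r, hr, hball⟩ :=
    Metric.isOpen_iff.1 ((isOpen_singleton_iff_punctured_nhds x).2 hbot) x rfl
  have hx z (hz : dist z x < r) : z = x := hball (mem_ball.2 hz)
  obtain ⟨p, hp, hper⟩ : ∃ p, 0 < p ∧ IsPeriodicPt f p x := by
    obtain ⟨p, hp, hpx⟩ := hf.exists_iterate_dist_le_of_isolated hr hx x (half_pos hr)
    exact ⟨p, hp, hx _ (by linarith)⟩
  have horbit : range (fun k => f^[k] x) ⊆ range (fun k : Fin p => f^[k] x) :=
    range_subset_iff.2 fun k => ⟨⟨k % p, Nat.mod_lt k hp⟩, hper.iterate_mod_apply k⟩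
  have hdense : closure (range fun k : Fin p => f^[k] x) = univ := by
    refine eq_univ_of_forall fun y => Metric.mem_closure_iff.2 fun η hη => ?_
    obtain ⟨t, -, ht⟩ := hf.exists_iterate_dist_le_of_isolated hr hx y (half_pos hη)
    exact ⟨_, horbit ⟨t, rfl⟩, by rw [dist_comm]; linarith⟩
  rw [(finite_range _).isClosed.closure_eq] at hdense
  exact infinite_univ (hdense ▸ finite_range _)

theorem exists_gap_iterate_mem_Ws [CompactSpace X] (hf : GluingOrbit f) (hc : Continuous f)
    {δ : ℝ} (hδ : 0 < δ) :
    ∃ M, ∀ u v : X, ∀ n, ∃ t ∈ Finset.Icc 1 M, ∃ z ∈ closedBowenBall f v n δ,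
      f^[n + t] z ∈ Ws f δ u := by
  obtain ⟨M, hM⟩ := hf δ hδ
  refine ⟨M, fun u v n => ?_⟩
  -- The gap may change with the tracing length `m`; the union over all gaps is still closed.
  set K := ⋃ t ∈ Finset.Icc 1 M, f^[n + t] '' closedBowenBall f v n δ
  have hK : IsClosed K := isClosed_biUnion_finset fun t _ =>
    ((isClosed_closedBowenBall hc n).isCompact.image (hc.iterate _)).isClosed
  have hshadow m : (K ∩ closedBowenBall f u m δ).Nonempty := by
    obtain ⟨t, ht, z, hz⟩ := hM fun j => if j = 0 then (v, n) else (u, m)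
    refine ⟨f^[n + t 0] z, mem_iUnion₂.2 ⟨t 0, Finset.mem_Icc.2 (ht 0), z,
      fun l hl => by simpa using hz 0 l hl, rfl⟩, fun k hk => ?_⟩
    have := hz 1 k (by simpa using hk)
    simpa [← iterate_add_apply, add_comm k] using this
  obtain ⟨y, hyK, hyu⟩ := hK.inter_Ws_nonempty hc hshadow
  obtain ⟨t, ht, z, hz, rfl⟩ := mem_iUnion₂.1 hyK
  exact ⟨t, ht, z, hz, hyu⟩

theorem nontrivial_Ws [CompactSpace X] (hf : GluingOrbit f) (hc : Continuous f)
    (hinj : Injective f) {ε : ℝ} (hε : 0 < ε)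
    (hsep : ∀ N, ∃ s : Finset X, s.card = N ∧ (s : Set X).Pairwise fun v w => v ∉ Ws f ε w)
    (u : X) {δ : ℝ} (hδ : 0 < δ) : (Ws f δ u).Nontrivial := by
  set δ' := min δ (ε / 2)
  obtain ⟨M, hM⟩ := hf.exists_gap_iterate_mem_Ws hc (lt_min hδ (half_pos hε) : 0 < δ')
  obtain ⟨s, hcard, hs⟩ := hsep (M + 1)
  obtain ⟨n, hn⟩ := exists_pairwise_notMem_closedBowenBall hs
  choose t ht z hzv hzu using fun v => hM u v n
  obtain ⟨v, hv, w, hw, hvw, htvw⟩ :=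
    Finset.exists_ne_map_eq_of_card_lt_of_maps_to (s := s) (by simp [hcard]) fun v _ => ht v
  have hδ' : δ' ≤ δ := min_le_left _ _
  refine ⟨_, Ws_mono hδ' (hzu v), _, Ws_mono hδ' (hzu w), fun heq => hn hv hw hvw fun l hl => ?_⟩
  have hz : z v = z w := hinj.iterate _ (by rwa [htvw] at heq)
  calc dist (f^[l] v) (f^[l] w)
      ≤ dist (f^[l] (z v)) (f^[l] v) + dist (f^[l] (z w)) (f^[l] w) := by
        rw [← hz]; exact dist_triangle_left _ _ _
    _ ≤ δ' + δ' := add_le_add (hzv v l hl) (hzv w l hl)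
    _ ≤ ε := by linarith [min_le_right δ (ε / 2)]

end GluingOrbit

/-- If `f` is a homeomorphism of an infinite compact metric space satisfying the
gluing-orbit property, then `f` is not positively countably expansive: for every `ε > 0`
there is `x ∈ X` whose local stable set `W^s_ε(x)` is uncountable. -/
theorem stmt1 [MetricSpace X] [CompactSpace X] [Infinite X] (f : X ≃ₜ X)
    (hf : GluingOrbit (f : X → X)) :
    ∀ ε : ℝ, 0 < ε → ∃ x : X, ¬ (Ws (f : X → X) ε x).Countable := by
  intro ε hε
  by_contra! hcount
  have huncountable : ¬ (univ : Set X).Countable :=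
    hf.perfectSpace.univ_perfect.not_countable univ_nonempty
  by_cases hcover : ∃ s : Finset X, ∀ x, ∃ w ∈ s, x ∈ Ws f ε w
  · obtain ⟨s, hs⟩ := hcover
    refine huncountable ((s.countable_toSet.biUnion fun w _ => hcount w).mono fun x _ => ?_)
    simpa using hs x
  · push Not at hcover
    have hsep := exists_card_eq_pairwise_notMem_Ws hε.le hcover
    obtain ⟨x⟩ := Infinite.nonempty X
    exact not_countable_Ws_of_forall_nontrivial f.continuous
      (fun u _ hδ => hf.nontrivial_Ws f.continuous f.injective hε hsep u hδ) hε x (hcount x)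
end

section
/- Let $X$ be a compact metric space and $f: X \to X$ a homeomorphism that has the gluing-orbit property but is not topologically mixing. Then the induced hyperspace map $2^f$ on the space of nonempty compact subsets of $X$ with the Hausdorff metric does not have the gluing-orbit property. -/
open Function Metric Filter

variable {X : Type*}

open TopologicalSpace in
/-- The induced map `2^f` on the hyperspace of nonempty compact subsets of `X`
(with the Hausdorff metric), `2^f (A) = f(A)`. -/
noncomputable def hyperMap [MetricSpace X] (f : X ≃ₜ X) :
    NonemptyCompacts X → NonemptyCompacts X :=
  fun A => ⟨⟨f '' A, A.isCompact.image f.continuous⟩, A.nonempty.image f⟩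
/-- `f` is topologically mixing. -/
def TopMixing [TopologicalSpace X] (f : X → X) : Prop :=
  ∀ U V : Set X, IsOpen U → IsOpen V → U.Nonempty → V.Nonempty →
    ∃ n : ℕ, ∀ k, n ≤ k → (f^[k] '' U ∩ V).Nonempty

/-!
If `2^f` had the gluing-orbit property, glue the orbit segment of length `0` of the singleton
`{x}` to the orbit segment of length `k` of the fixed point `X` of `2^f`. The tracing compact set
`Z` lies near `x`, while `f^k(Z)` is Hausdorff-close to `X`, hence meets any prescribed ball.
Since the gap is bounded by `M`, this works for every `k ≥ M`, so `f` would be mixing.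
-/

open TopologicalSpace

variable {Y : Type*}

theorem GluingOrbit.exists_trace_pair [MetricSpace Y] {g : Y → Y} (hg : GluingOrbit g) {ε : ℝ}
    (hε : 0 < ε) : ∃ M : ℕ, ∀ (a b : Y) (m : ℕ), ∃ t, t ≤ M ∧ ∃ z,
      dist z a ≤ ε ∧ ∀ l ≤ m, dist (g^[t + l] z) (g^[l] b) ≤ ε := by
  obtain ⟨M, hM⟩ := hg ε hε
  refine ⟨M, fun a b m => ?_⟩
  obtain ⟨t, ht, z, hz⟩ := hM fun j => if j = 0 then (a, 0) else (b, m)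
  refine ⟨t 0, (ht 0).2, z, by simpa using hz 0 0 le_rfl, fun l hl => ?_⟩
  simpa using hz 1 l hl

theorem NonemptyCompacts.exists_dist_lt_of_dist_lt [MetricSpace X] {A B : NonemptyCompacts X}
    {r : ℝ} (h : dist A B < r) {x : X} (hx : x ∈ A) : ∃ y ∈ B, dist x y < r :=
  exists_dist_lt_of_hausdorffDist_lt hx h (edist_ne_top A B)

section hyperMap

variable [MetricSpace X] (f : X ≃ₜ X)

theorem coe_hyperMap_iterate (n : ℕ) (A : NonemptyCompacts X) :
    ((hyperMap f)^[n] A : Set X) = f^[n] '' A := by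
  induction n with
  | zero => simp
  | succ n ih =>
    rw [iterate_succ_apply', iterate_succ', Set.image_comp, ← ih]
    rfl

theorem hyperMap_iterate_top [CompactSpace X] [Nonempty X] (n : ℕ) :
    (hyperMap f)^[n] ⊤ = ⊤ :=
  NonemptyCompacts.ext <| by
    rw [coe_hyperMap_iterate, NonemptyCompacts.coe_top, Set.image_univ_of_surjective]
    exact f.surjective.iterate n

theorem topMixing_of_gluingOrbit_hyperMap [CompactSpace X] (hg : GluingOrbit (hyperMap f)) :
    TopMixing (f : X → X) := by
  rintro U V hU hV ⟨x, hxU⟩ ⟨y, hyV⟩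
  have : Nonempty X := ⟨x⟩
  obtain ⟨εU, hεU, hballU⟩ := isOpen_iff.1 hU x hxU
  obtain ⟨εV, hεV, hballV⟩ := isOpen_iff.1 hV y hyV
  set ε := min εU εV
  have hε : 0 < ε := lt_min hεU hεV
  obtain ⟨M, hM⟩ := hg.exists_trace_pair (half_pos hε)
  refine ⟨M, fun k hk => ?_⟩
  obtain ⟨t, htM, Z, hZx, hZk⟩ := hM {x} ⊤ k
  have hZU : (Z : Set X) ⊆ U := fun p hp => by
    obtain ⟨q, rfl, hpq⟩ :=
      NonemptyCompacts.exists_dist_lt_of_dist_lt (hZx.trans_lt (half_lt_self hε)) hp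
    exact hballU (hpq.trans_le (min_le_left _ _))
  have hfkZ := hZk (k - t) (Nat.sub_le k t)
  rw [Nat.add_sub_cancel' (htM.trans hk), hyperMap_iterate_top, dist_comm] at hfkZ
  obtain ⟨w, hw, hyw⟩ := NonemptyCompacts.exists_dist_lt_of_dist_lt
    (hfkZ.trans_lt (half_lt_self hε)) (Set.mem_univ y)
  rw [← SetLike.mem_coe, coe_hyperMap_iterate] at hw
  exact ⟨w, Set.image_mono hZU hw, hballV (mem_ball'.2 (hyw.trans_le (min_le_right _ _)))⟩

end hyperMap

theorem stmt10_general [MetricSpace X] [CompactSpace X] (f : X ≃ₜ X)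
    (hmix : ¬ TopMixing (f : X → X)) :
    ¬ GluingOrbit (hyperMap f) :=
  fun hg => hmix (topMixing_of_gluingOrbit_hyperMap f hg)

/-- If a homeomorphism of a compact metric space has the gluing-orbit property but is not
topologically mixing, then its induced hyperspace map `2^f` does not have the
gluing-orbit property. -/
theorem stmt10 [MetricSpace X] [CompactSpace X] (f : X ≃ₜ X)
    (hf : GluingOrbit (f : X → X)) (hmix : ¬ TopMixing (f : X → X)) :
    ¬ GluingOrbit (hyperMap f) :=
  stmt10_general f hmix
end

section
/- Let $X$ be a compact metric space and $f: X \to X$ a positively countably expansive homeomorphism that is topologically transitive and satisfies the shadowing property. Then $X$ is countable. -/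
open Function Metric Filter

variable {X : Type*}

/-- `p` is a transitive point: its forward orbit is dense. -/
def TransitivePoint [TopologicalSpace X] (f : X → X) (p : X) : Prop :=
  Dense (Set.range fun n : ℕ => f^[n] p)
/-- The `n`-th iterate (`n ∈ ℤ`) of a homeomorphism `f`. -/
def zIter [TopologicalSpace X] (f : X ≃ₜ X) (n : ℤ) : X → X := fun x => (f.toEquiv ^ n) x

/-- `f` has the shadowing property: every `δ`-pseudo-orbit (indexed by `ℤ`) is
`ε`-shadowed by a true orbit. -/
def Shadowing [MetricSpace X] (f : X ≃ₜ X) : Prop :=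
  ∀ ε : ℝ, 0 < ε → ∃ δ : ℝ, 0 < δ ∧ ∀ x : ℤ → X,
    (∀ n : ℤ, dist (f (x n)) (x (n + 1)) < δ) →
    ∃ y : X, ∀ n : ℤ, dist (zIter f n y) (x n) < ε

open Set

/-!
Let `ε` be an expansivity constant and `δ` a shadowing constant for `ε / 2`. If two
`δ`-pseudo-orbit loops of the same length at the same point were more than `ε` apart at some
time, then concatenating copies of them into the past in all `2 ^ ℕ` possible ways, and following
one fixed loop in the future, would produce (by shadowing) uncountably many points in a single
`ε`-stable set. So loops of equal length stay `ε`-close.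

A transitive point `p` lets one return along a pseudo-orbit from anywhere to any point `a` of
its `ω`-limit set. If `b` is close to `a`, the loop "follow the orbit of `a` for `k` steps,
return, follow the orbit of `b` for `k` steps, return" and the one with its two halves swapped
are `ε`-close at time `k`; hence a ball around `a` lies in `W^s_ε(a)`. The compact `ω`-limit set
is therefore countable, and `X`, the closure of the orbit of `p`, is this orbit together with
its `ω`-limit set.
-/

section PseudoPath

variable {u v : ℕ → X} {m n : ℕ}

def pathAppend (u : ℕ → X) (m : ℕ) (v : ℕ → X) : ℕ → X :=
  fun i => if i < m then u i else v (i - m)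

theorem pathAppend_add (u : ℕ → X) (m : ℕ) (v : ℕ → X) (i : ℕ) :
    pathAppend u m v (m + i) = v i := by
  simp [pathAppend]

theorem pathAppend_of_le (h : u m = v 0) {i : ℕ} (hi : i ≤ m) : pathAppend u m v i = u i := by
  rcases hi.lt_or_eq with hi | rfl
  · exact if_pos hi
  · simpa using (pathAppend_add u i v 0).trans h.symm

structure IsPseudoPath [PseudoMetricSpace X] (f : X → X) (δ : ℝ) (u : ℕ → X) (x y : X)
    (n : ℕ) : Prop where
  start : u 0 = x
  finish : u n = y
  step : ∀ i < n, dist (f (u i)) (u (i + 1)) < δ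

variable [PseudoMetricSpace X] {f : X → X} {δ : ℝ} {x y z : X}

theorem IsPseudoPath.append (hu : IsPseudoPath f δ u x y m) (hv : IsPseudoPath f δ v y z n) :
    IsPseudoPath f δ (pathAppend u m v) x z (m + n) := by
  have hjoin : u m = v 0 := hu.finish.trans hv.start.symm
  refine ⟨(pathAppend_of_le hjoin m.zero_le).trans hu.start,
    (pathAppend_add u m v n).trans hv.finish, fun i hi => ?_⟩
  rcases lt_or_ge i m with him | hmi
  · rw [pathAppend_of_le hjoin him.le, pathAppend_of_le hjoin him]
    exact hu.step i him
  · obtain ⟨k, rfl⟩ := Nat.exists_eq_add_of_le hmi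
    rw [add_assoc, pathAppend_add, pathAppend_add]
    exact hv.step k (by omega)

theorem IsPseudoPath.append_apply_of_le (hu : IsPseudoPath f δ u x y m)
    (hv : IsPseudoPath f δ v y z n) {i : ℕ} (hi : i ≤ m) : pathAppend u m v i = u i :=
  pathAppend_of_le (hu.finish.trans hv.start.symm) hi

theorem isPseudoPath_ite_iterate (hδ : 0 < δ) (hxy : dist (f x) (f y) < δ) (hn : 0 < n) :
    IsPseudoPath f δ (fun i => if i = 0 then x else f^[i] y) x (f^[n] y) n := by
  refine ⟨if_pos rfl, if_neg hn.ne', fun i _ => ?_⟩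
  rcases i with _ | i
  · simpa using hxy
  · simp [← iterate_succ_apply' f, hδ]

theorem exists_isPseudoPath_to_mapClusterPt {p a : X} (hδ : 0 < δ)
    (hp : Dense (range fun n => f^[n] p)) (ha : MapClusterPt a atTop fun n => f^[n] p) (x : X) :
    ∃ m w, IsPseudoPath f δ w x a m := by
  obtain ⟨_, hn₁, n₁, rfl⟩ := dense_iff.1 hp (f x) δ hδ
  obtain ⟨n₂, hn₂, hn₂a⟩ := frequently_atTop.1
    (mapClusterPt_iff_frequently.1 ha _ (ball_mem_nhds a hδ)) (n₁ + 1)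
  refine ⟨n₂ - n₁ + 1,
    fun i => if i = 0 then x else if i ≤ n₂ - n₁ then f^[n₁ + i - 1] p else a,
    if_pos rfl, by simp, fun i hi => ?_⟩
  rcases i with _ | i
  · simpa [dist_comm, show 1 ≤ n₂ - n₁ by omega] using hn₁
  · rcases (Nat.lt_succ_iff.1 hi).lt_or_eq with hi | hi
    · simp [show i + 1 ≤ n₂ - n₁ by omega, show i + 1 + 1 ≤ n₂ - n₁ by omega,
        show n₁ + (i + 1) - 1 = n₁ + i by omega,
        show n₁ + (i + 1 + 1) - 1 = n₁ + i + 1 by omega,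
        iterate_succ_apply', hδ]
    · have hlast : n₁ + (i + 1) - 1 + 1 = n₂ := by omega
      rw [if_neg i.succ_ne_zero, if_pos hi.le, if_neg (i + 1).succ_ne_zero, if_neg (by omega),
        ← iterate_succ_apply' f, Nat.succ_eq_add_one, hlast]
      exact hn₂a

end PseudoPath

section LoopConcat

def loopConcat (γ : ℤ → ℕ → X) (L : ℕ) : ℤ → X := fun n => γ (n / L) (n % L).toNat

theorem loopConcat_mul_add (γ : ℤ → ℕ → X) {L r : ℕ} (q : ℤ) (hr : r < L) :
    loopConcat γ L (L * q + r) = γ q r := by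
  obtain ⟨hq, hr'⟩ := (Int.ediv_emod_unique (a := L * q + r) (b := L) (r := r) (q := q)
    (by omega)).2 ⟨by ring, by omega, by omega⟩
  simp only [loopConcat, hq, hr', Int.toNat_natCast]

variable [PseudoMetricSpace X] {f : X → X} {δ : ℝ} {z : X} {L : ℕ}

theorem dist_loopConcat_lt {γ : ℤ → ℕ → X} (hγ : ∀ q, IsPseudoPath f δ (γ q) z z L)
    (hL : 0 < L) (n : ℤ) : dist (f (loopConcat γ L n)) (loopConcat γ L (n + 1)) < δ := by
  obtain ⟨q, r, hr, rfl⟩ : ∃ (q : ℤ) (r : ℕ), r < L ∧ n = L * q + r :=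
    have h0 := Int.emod_nonneg n (b := L) (by omega)
    have h1 := Int.emod_lt_of_pos n (b := L) (by omega)
    ⟨n / L, (n % L).toNat, by omega, by rw [Int.toNat_of_nonneg h0, Int.mul_ediv_add_emod]⟩
  rw [loopConcat_mul_add γ q hr]
  rcases (Nat.succ_le_of_lt hr).lt_or_eq with hr1 | hr1
  · rw [add_assoc, ← Nat.cast_add_one, loopConcat_mul_add γ q hr1]
    exact (hγ q).step r hr
  · have hnext : L * q + r + 1 = L * (q + 1) + (0 : ℕ) := by
      rw [← hr1]
      push_cast
      ring
    rw [hnext, loopConcat_mul_add γ (q + 1) hL, (hγ (q + 1)).start, ← (hγ q).finish, ← hr1]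
    exact (hγ q).step r hr

end LoopConcat

theorem zIter_natCast [TopologicalSpace X] (f : X ≃ₜ X) (n : ℕ) :
    zIter f n = (f : X → X)^[n] := by
  ext x
  simp [zIter, Equiv.Perm.coe_pow]

theorem exists_injective_forall_mem_Ws [MetricSpace X] (f : X ≃ₜ X) {ε δ : ℝ}
    (hshad : ∀ x : ℤ → X, (∀ n : ℤ, dist (f (x n)) (x (n + 1)) < δ) →
      ∃ y : X, ∀ n : ℤ, dist (zIter f n y) (x n) < ε / 2)
    {z : X} {L : ℕ} {u v : ℕ → X} (hu : IsPseudoPath f δ u z z L)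
    (hv : IsPseudoPath f δ v z z L) {j : ℕ} (hj : j < L) (hsep : ε < dist (u j) (v j)) :
    ∃ y : Set ℕ → X, Injective y ∧ ∀ s, y s ∈ Ws f ε (y ∅) := by
  classical
  let γ : Set ℕ → ℤ → ℕ → X := fun s q => if q ∈ Int.negSucc '' s then v else u
  have hγ (s : Set ℕ) (q : ℤ) : IsPseudoPath f δ (γ s q) z z L := by
    dsimp only [γ]
    split_ifs
    exacts [hv, hu]
  choose y hy using fun s => hshad _ (dist_loopConcat_lt (hγ s) (j.zero_le.trans_lt hj))
  have hfuture (s : Set ℕ) (k : ℕ) : loopConcat (γ s) L k = loopConcat (γ ∅) L k := by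
    have hk : (k : ℤ) / L ∉ Int.negSucc '' s := by
      rintro ⟨m, -, hm⟩
      have := Int.negSucc_lt_zero m
      have := Int.ediv_nonneg (Int.natCast_nonneg k) (Int.natCast_nonneg L)
      omega
    simp only [loopConcat, γ, if_neg hk, image_empty, mem_empty_iff_false, if_false]
  refine ⟨y, fun s t hst => ?_, fun s k => ?_⟩
  · by_contra hne
    obtain ⟨m, hm⟩ : ∃ m, ¬(m ∈ s ↔ m ∈ t) := by
      contrapose! hne
      exact Set.ext hne
    set n : ℤ := L * Int.negSucc m + j
    have hblock (w : Set ℕ) : loopConcat (γ w) L n = if m ∈ w then v j else u j := by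
      rw [loopConcat_mul_add _ _ hj]
      by_cases hmw : m ∈ w <;> simp [γ, hmw]
    have hclose : dist (loopConcat (γ s) L n) (loopConcat (γ t) L n) < ε := by
      have h₁ := hy s n
      rw [hst] at h₁
      linarith [hy t n, dist_triangle_left (loopConcat (γ s) L n) (loopConcat (γ t) L n)
        (zIter f n (y t))]
    rw [hblock, hblock] at hclose
    by_cases hms : m ∈ s
    · rw [if_pos hms, if_neg fun hmt => hm (iff_of_true hms hmt), dist_comm] at hclose
      linarith
    · rw [if_neg hms, if_pos (by_contra fun hmt => hm (iff_of_false hms hmt))] at hclose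
      linarith
  · have h₁ := hy s k
    have h₂ := hy ∅ k
    rw [zIter_natCast, hfuture] at h₁
    rw [zIter_natCast] at h₂
    linarith [dist_triangle_right ((⇑f)^[k] (y s)) ((⇑f)^[k] (y ∅)) (loopConcat (γ ∅) L k)]

theorem dist_le_of_isPseudoPath_of_countable_Ws [MetricSpace X] (f : X ≃ₜ X) {ε δ : ℝ}
    (hWs : ∀ x : X, (Ws (f : X → X) ε x).Countable)
    (hshad : ∀ x : ℤ → X, (∀ n : ℤ, dist (f (x n)) (x (n + 1)) < δ) →
      ∃ y : X, ∀ n : ℤ, dist (zIter f n y) (x n) < ε / 2)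
    {z : X} {L : ℕ} {u v : ℕ → X} (hu : IsPseudoPath f δ u z z L)
    (hv : IsPseudoPath f δ v z z L) {j : ℕ} (hj : j < L) : dist (u j) (v j) ≤ ε := by
  by_contra! hsep
  obtain ⟨y, hinj, hstable⟩ := exists_injective_forall_mem_Ws f hshad hu hv hj hsep
  have : Countable (Set ℕ) := Set.countable_univ_iff.1 <|
    (mapsTo_univ_iff.2 hstable).countable_of_injOn hinj.injOn (hWs (y ∅))
  obtain ⟨e, he⟩ := Countable.exists_injective_nat (Set ℕ)
  exact cantor_injective e he

theorem mem_Ws_of_dist_le_of_dist_lt [MetricSpace X] {f : X → X} {ε δ : ℝ} {a b : X}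
    (hδ : 0 < δ) (hpath : ∀ x, ∃ m w, IsPseudoPath f δ w x a m)
    (hloops : ∀ L u v j, IsPseudoPath f δ u a a L → IsPseudoPath f δ v a a L → j < L →
      dist (u j) (v j) ≤ ε)
    (hab : dist a b ≤ ε) (hfab : dist (f a) (f b) < δ) : b ∈ Ws f ε a := by
  intro k
  rcases k.eq_zero_or_pos with rfl | hk
  · simpa [dist_comm] using hab
  obtain ⟨ma, ra, hra⟩ := hpath (f^[k] a)
  obtain ⟨mb, rb, hrb⟩ := hpath (f^[k] b)
  have hoa := isPseudoPath_ite_iterate (f := f) (x := a) (y := a) hδ (by rwa [dist_self]) hk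
  have hob := isPseudoPath_ite_iterate hδ hfab hk
  have hloop_ab := (hob.append hrb).append (hoa.append hra)
  have hloop_ba := (hoa.append hra).append (hob.append hrb)
  rw [add_comm (k + ma)] at hloop_ba
  have := hloops _ _ _ k hloop_ab hloop_ba (by omega)
  rwa [(hob.append hrb).append_apply_of_le (hoa.append hra) (by omega),
    (hoa.append hra).append_apply_of_le (hob.append hrb) (by omega),
    hob.append_apply_of_le hrb le_rfl, hoa.append_apply_of_le hra le_rfl,
    if_neg hk.ne', if_neg hk.ne'] at this

theorem closure_range_subset_range_union_mapClusterPt [TopologicalSpace X] [T1Space X]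
    (u : ℕ → X) : closure (range u) ⊆ range u ∪ {x | MapClusterPt x atTop u} := by
  intro x hx
  by_contra! h
  rw [mem_union, not_or] at h
  obtain ⟨N, hN⟩ := not_forall.1 (mapClusterPt_atTop_iff_forall_mem_closure.not.1 h.2)
  rw [← image_univ, ← Iio_union_Ici (a := N), image_union, closure_union,
    ((finite_Iio N).image u).isClosed.closure_eq] at hx
  exact hx.elim (fun ⟨n, _, hn⟩ => h.1 ⟨n, hn⟩) hN

/-- A positively countably expansive homeomorphism of a compact metric space that is
topologically transitive and has the shadowing property forces `X` to be countable. -/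
theorem stmt15 [MetricSpace X] [CompactSpace X] (f : X ≃ₜ X)
    (hexp : ∃ ε : ℝ, 0 < ε ∧ ∀ x : X, (Ws (f : X → X) ε x).Countable)
    (htrans : ∃ p : X, TransitivePoint (f : X → X) p)
    (hsh : Shadowing f) :
    Countable X := by
  obtain ⟨ε, hε, hWs⟩ := hexp
  obtain ⟨p, hp⟩ := htrans
  obtain ⟨δ, hδ, hshad⟩ := hsh (ε / 2) (half_pos hε)
  obtain ⟨r, hr, hfr⟩ := Metric.uniformContinuous_iff.1
    (CompactSpace.uniformContinuous_of_continuous f.continuous) δ hδ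
  set ω := {a | MapClusterPt a atTop fun n => (f : X → X)^[n] p}
  have hball (a : X) (ha : a ∈ ω) : ball a (min r ε) ⊆ Ws f ε a := fun b hb =>
    mem_Ws_of_dist_le_of_dist_lt hδ (exists_isPseudoPath_to_mapClusterPt hδ hp ha)
      (fun _ _ _ _ hu hv hj => dist_le_of_isPseudoPath_of_countable_Ws f hWs hshad hu hv hj)
      ((mem_ball'.1 hb).le.trans (min_le_right _ _))
      (hfr ((mem_ball'.1 hb).trans_le (min_le_left _ _)))
  obtain ⟨t, htω, ht, hcover⟩ :=
    finite_cover_balls_of_compact (s := ω) isClosed_setOfPred_clusterPt.isCompact (lt_min hr hε)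
  have hω : ω.Countable := (ht.countable.biUnion fun a _ => hWs a).mono <|
    hcover.trans (biUnion_mono subset_rfl fun a ha => hball a (htω ha))
  rw [← countable_univ_iff, ← hp.closure_eq]
  exact ((countable_range _).union hω).mono (closure_range_subset_range_union_mapClusterPt _)
end
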